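/- arXiv:1211.0475 — 8 statements merged into one kernel-verified Lean document; each statement's English description precedes it below -/
import Mathlib

section
/- Let 𝒳 ⊆ L⁰₊ be a solid set. Then the convex hull conv 𝒳 is also solid; that is, whenever Z ∈ L⁰₊ satisfies Z ≤ W a.e. for some W ∈ conv 𝒳, it follows that Z ∈ conv 𝒳. -/
open MeasureTheory Filter Topology

/-- `L⁰₊`: (representatives of) measurable functions that are nonnegative `P`-a.s. -/
def L0pos {Ω : Type*} [MeasurableSpace Ω] (P : Measure Ω) : Set (Ω → ℝ) :=
  {X | Measurable X ∧ ∀ᵐ ω ∂P, 0 ≤ X ω}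

/-- A set `S ⊆ L⁰₊` is solid if `X ∈ S`, `Y ∈ L⁰₊` and `Y ≤ X` a.e. imply `Y ∈ S`. -/
def Solid {Ω : Type*} [MeasurableSpace Ω] (P : Measure Ω) (S : Set (Ω → ℝ)) : Prop :=
  ∀ X ∈ S, ∀ Y ∈ L0pos P, (∀ᵐ ω ∂P, Y ω ≤ X ω) → Y ∈ S

/-!
If `Z ≤ W = ∑ wᵢ Xᵢ`, split `Z` along the convex combination: `Z = ∑ wᵢ (Z / W) Xᵢ`.
Since `0 ≤ Z / W ≤ 1`, each piece `(Z / W) Xᵢ` lies below `Xᵢ`, hence in `𝒳` by solidity.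
-/

section ProportionalPart

variable {Ω : Type*}

/-- Set to `Z` where `W` vanishes, so that the pieces recombine to `Z` everywhere and not only
almost everywhere (`Z ≤ W` holds only a.e.). -/
noncomputable def proportionalPart (Z W X : Ω → ℝ) : Ω → ℝ :=
  fun ω ↦ if W ω = 0 then Z ω else Z ω * X ω / W ω

theorem sum_smul_proportionalPart {ι : Type*} {t : Finset ι} {w : ι → ℝ} {X : ι → Ω → ℝ}
    (hw : ∑ i ∈ t, w i = 1) (Z : Ω → ℝ) :
    ∑ i ∈ t, w i • proportionalPart Z (∑ i ∈ t, w i • X i) (X i) = Z := by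
  funext ω
  set W := ∑ i ∈ t, w i • X i
  have hWω : W ω = ∑ i ∈ t, w i * X i ω := by simp [W, Finset.sum_apply]
  simp only [Finset.sum_apply, Pi.smul_apply, smul_eq_mul, proportionalPart]
  by_cases h : W ω = 0
  · simp only [h, if_true, ← Finset.sum_mul, hw, one_mul]
  · calc ∑ i ∈ t, w i * (if W ω = 0 then Z ω else Z ω * X i ω / W ω)
        = Z ω / W ω * ∑ i ∈ t, w i * X i ω := by
          simp only [h, if_false, Finset.mul_sum]
          exact Finset.sum_congr rfl fun i _ ↦ by ring
      _ = Z ω := by rw [← hWω, div_mul_cancel₀ _ h]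

theorem proportionalPart_nonneg_le {Z W X : Ω → ℝ} {ω : Ω} (hZ : 0 ≤ Z ω) (hZW : Z ω ≤ W ω)
    (hX : 0 ≤ X ω) : 0 ≤ proportionalPart Z W X ω ∧ proportionalPart Z W X ω ≤ X ω := by
  unfold proportionalPart
  by_cases h : W ω = 0
  · simp only [h, if_true] at hZW ⊢
    exact ⟨hZ, hZW.trans hX⟩
  · have hW : 0 < W ω := lt_of_le_of_ne (hZ.trans hZW) (Ne.symm h)
    simp only [h, if_false]
    refine ⟨by positivity, ?_⟩
    rw [div_le_iff₀ hW, mul_comm (X ω)]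
    exact mul_le_mul_of_nonneg_right hZW hX

theorem measurable_proportionalPart {Z W X : Ω → ℝ} [MeasurableSpace Ω] (hZ : Measurable Z)
    (hW : Measurable W) (hX : Measurable X) : Measurable (proportionalPart Z W X) :=
  Measurable.ite (hW (measurableSet_singleton 0)) hZ ((hZ.mul hX).div hW)

theorem Solid.proportionalPart_mem [MeasurableSpace Ω] {P : Measure Ω} {𝒳 : Set (Ω → ℝ)}
    (hsolid : Solid P 𝒳) (h𝒳 : 𝒳 ⊆ L0pos P) {Z W X : Ω → ℝ} (hZ : Z ∈ L0pos P)
    (hW : Measurable W) (hle : ∀ᵐ ω ∂P, Z ω ≤ W ω) (hX : X ∈ 𝒳) :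
    proportionalPart Z W X ∈ 𝒳 := by
  have hbounds : ∀ᵐ ω ∂P, 0 ≤ proportionalPart Z W X ω ∧ proportionalPart Z W X ω ≤ X ω := by
    filter_upwards [hZ.2, hle, (h𝒳 hX).2] with ω hZω hZW hXω
    exact proportionalPart_nonneg_le hZω hZW hXω
  refine hsolid X hX _ ⟨measurable_proportionalPart hZ.1 hW (h𝒳 hX).1, ?_⟩ ?_
  · filter_upwards [hbounds] with ω h using h.1
  · filter_upwards [hbounds] with ω h using h.2

end ProportionalPart

theorem stmt_0_general {Ω : Type*} [MeasurableSpace Ω] (P : Measure Ω)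
    (𝒳 : Set (Ω → ℝ)) (h𝒳 : 𝒳 ⊆ L0pos P) (hsolid : Solid P 𝒳)
    (Z : Ω → ℝ) (hZ : Z ∈ L0pos P)
    (W : Ω → ℝ) (hW : W ∈ convexHull ℝ 𝒳)
    (hle : ∀ᵐ ω ∂P, Z ω ≤ W ω) :
    Z ∈ convexHull ℝ 𝒳 := by
  rw [convexHull_eq] at hW
  obtain ⟨ι, t, w, X, hw0, hw1, hX, rfl⟩ := hW
  rw [Finset.centerMass_eq_of_sum_1 _ _ hw1] at hle
  have hWmeas : Measurable (∑ i ∈ t, w i • X i) := by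
    rw [Finset.sum_fn]
    exact Finset.measurable_sum t fun i hi ↦ (h𝒳 (hX i hi)).1.const_smul (w i)
  rw [← sum_smul_proportionalPart hw1 Z]
  exact (convex_convexHull ℝ 𝒳).sum_mem hw0 hw1 fun i hi ↦
    subset_convexHull ℝ 𝒳 (hsolid.proportionalPart_mem h𝒳 hZ hWmeas hle (hX i hi))

/-- The convex hull of a solid subset of `L⁰₊` is solid. -/
theorem stmt_0 {Ω : Type*} [MeasurableSpace Ω] (P : Measure Ω) [IsProbabilityMeasure P]
    (𝒳 : Set (Ω → ℝ)) (h𝒳 : 𝒳 ⊆ L0pos P) (hsolid : Solid P 𝒳)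
    (Z : Ω → ℝ) (hZ : Z ∈ L0pos P)
    (W : Ω → ℝ) (hW : W ∈ convexHull ℝ 𝒳)
    (hle : ∀ᵐ ω ∂P, Z ω ≤ W ω) :
    Z ∈ convexHull ℝ 𝒳 :=
  stmt_0_general P 𝒳 h𝒳 hsolid Z hZ W hW hle
end

section
/- Let 𝒳 ⊆ L⁰₊ and for each n ∈ ℕ define Oₙ^𝒳 := sc{(X − n)₊ : X ∈ 𝒳}. Suppose there exists a probability measure Q ~ P such that 𝒳 is uniformly Q-integrable. Then for every sequence (Zₙ) with Zₙ ∈ Oₙ^𝒳 for all n ∈ ℕ that converges in measure to some Z ∈ L⁰₊, one has Z = 0 a.e.; in particular ⋂ₙ Oₙ^𝒳 = {0}. -/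
/-! Every element of `Oₙ^𝒳` is dominated by a convex combination of the `(X - n)₊`, each of
which has `Q`-expectation at most `E_Q[X 1_{X > n}]`; so the `Q`-expectations over `Oₙ^𝒳` tend
to `0` by uniform integrability. Along a `P`-a.s., hence `Q`-a.s., convergent subsequence Fatou's
lemma gives `E_Q[Z₊] = 0`, i.e. `Z ≤ 0` `Q`-a.s. and therefore `P`-a.s.; and `Z ≥ 0` as a limit
of nonnegative functions. -/

open MeasureTheory Filter Topology

/-- `sc S`: the solid hull of the convex hull of `S`. -/
def scSet {Ω : Type*} [MeasurableSpace Ω] (P : Measure Ω) (S : Set (Ω → ℝ)) :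
    Set (Ω → ℝ) :=
  {Y | Y ∈ L0pos P ∧ ∃ Z ∈ convexHull ℝ S, ∀ᵐ ω ∂P, Y ω ≤ Z ω}

/-- `Oₙ^𝒳 = sc {(X - n)₊ : X ∈ 𝒳}`. -/
def Oset {Ω : Type*} [MeasurableSpace Ω] (P : Measure Ω) (𝒳 : Set (Ω → ℝ)) (n : ℕ) :
    Set (Ω → ℝ) :=
  scSet P {f | ∃ X ∈ 𝒳, f = fun ω => max (X ω - n) 0}

/-- `𝒳` is uniformly `Q`-integrable:  `sup_{X ∈ 𝒳} E_Q[X 1_{X > n}] → 0`. -/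
def UnifInt {Ω : Type*} [MeasurableSpace Ω] (Q : Measure Ω) (𝒳 : Set (Ω → ℝ)) : Prop :=
  Tendsto (fun n : ℕ => ⨆ X ∈ 𝒳, ∫⁻ ω in {ω | (n : ℝ) < X ω}, ENNReal.ofReal (X ω) ∂Q)
    atTop (𝓝 0)

open scoped ENNReal

namespace MeasureTheory

variable {α : Type*} [MeasurableSpace α]

theorem tendstoInMeasure_const {ι E : Type*} [PseudoEMetricSpace E] (μ : Measure α)
    (l : Filter ι) (g : α → E) : TendstoInMeasure μ (fun _ => g) l g := by
  intro ε hε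
  simpa [edist_self, not_le.2 hε] using tendsto_const_nhds

theorem TendstoInMeasure.ae_nonneg {μ : Measure α} {f : ℕ → α → ℝ} {g : α → ℝ}
    (hfg : TendstoInMeasure μ f atTop g) (hf : ∀ n, ∀ᵐ x ∂μ, 0 ≤ f n x) :
    ∀ᵐ x ∂μ, 0 ≤ g x := by
  obtain ⟨ns, -, hns⟩ := hfg.exists_seq_tendsto_ae
  filter_upwards [ae_all_iff.2 fun n => hf (ns n), hns] with x hnonneg hlim
  exact ge_of_tendsto' hlim hnonneg

theorem lintegral_ofReal_le_liminf_of_tendsto_ae {μ : Measure α} {f : ℕ → α → ℝ} {g : α → ℝ}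
    (hf : ∀ n, AEMeasurable (f n) μ)
    (hfg : ∀ᵐ x ∂μ, Tendsto (fun n => f n x) atTop (𝓝 (g x))) :
    ∫⁻ x, ENNReal.ofReal (g x) ∂μ ≤ liminf (fun n => ∫⁻ x, ENNReal.ofReal (f n x) ∂μ) atTop := by
  calc ∫⁻ x, ENNReal.ofReal (g x) ∂μ = ∫⁻ x, liminf (fun n => ENNReal.ofReal (f n x)) atTop ∂μ :=
        lintegral_congr_ae <| hfg.mono fun x hx =>
          ((ENNReal.continuous_ofReal.tendsto _).comp hx).liminf_eq.symm
    _ ≤ _ := lintegral_liminf_le' fun n => (hf n).ennreal_ofReal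

theorem ae_nonpos_of_tendstoInMeasure_of_lintegral_tendsto_zero {P Q : Measure α} (hQP : Q ≪ P)
    {f : ℕ → α → ℝ} {g : α → ℝ} (hf : ∀ n, Measurable (f n))
    (hfg : TendstoInMeasure P f atTop g)
    (hint : Tendsto (fun n => ∫⁻ x, ENNReal.ofReal (f n x) ∂Q) atTop (𝓝 0)) :
    ∀ᵐ x ∂Q, g x ≤ 0 := by
  obtain ⟨ns, hns, hlimP⟩ := hfg.exists_seq_tendsto_ae
  have hlimQ := hQP.ae_le hlimP
  have hg : AEMeasurable g Q :=
    aemeasurable_of_tendsto_metrizable_ae atTop (fun n => (hf (ns n)).aemeasurable) hlimQ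
  have hzero : ∫⁻ x, ENNReal.ofReal (g x) ∂Q = 0 := nonpos_iff_eq_zero.1 <|
    (lintegral_ofReal_le_liminf_of_tendsto_ae (fun n => (hf (ns n)).aemeasurable) hlimQ).trans_eq
      (hint.comp hns.tendsto_atTop).liminf_eq
  filter_upwards [(lintegral_eq_zero_iff' hg.ennreal_ofReal).1 hzero] with x hx
  exact ENNReal.ofReal_eq_zero.1 hx

theorem convex_setOf_lintegral_ofReal_le (μ : Measure α) (C : ℝ≥0∞) :
    Convex ℝ {f : α → ℝ | Measurable f ∧ 0 ≤ f ∧ ∫⁻ x, ENNReal.ofReal (f x) ∂μ ≤ C} := by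
  rintro f ⟨hfm, hf0, hfC⟩ g ⟨hgm, hg0, hgC⟩ a b ha hb hab
  refine ⟨(hfm.const_smul a).add (hgm.const_smul b),
    add_nonneg (smul_nonneg ha hf0) (smul_nonneg hb hg0), ?_⟩
  calc ∫⁻ x, ENNReal.ofReal ((a • f + b • g) x) ∂μ
      = ENNReal.ofReal a * ∫⁻ x, ENNReal.ofReal (f x) ∂μ +
          ENNReal.ofReal b * ∫⁻ x, ENNReal.ofReal (g x) ∂μ := by
        rw [← lintegral_const_mul _ hfm.ennreal_ofReal, ← lintegral_const_mul _ hgm.ennreal_ofReal,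
          ← lintegral_add_left (hfm.ennreal_ofReal.const_mul _)]
        refine lintegral_congr fun x => ?_
        simp only [Pi.add_apply, Pi.smul_apply, smul_eq_mul]
        rw [ENNReal.ofReal_add (mul_nonneg ha (hf0 x)) (mul_nonneg hb (hg0 x)),
          ENNReal.ofReal_mul ha, ENNReal.ofReal_mul hb]
    _ ≤ ENNReal.ofReal a * C + ENNReal.ofReal b * C := by gcongr
    _ = C := by rw [← add_mul, ← ENNReal.ofReal_add ha hb, hab, ENNReal.ofReal_one, one_mul]

theorem lintegral_ofReal_le_of_mem_scSet {P Q : Measure α} (hQP : Q ≪ P) {S : Set (α → ℝ)}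
    {C : ℝ≥0∞} (hS : ∀ f ∈ S, Measurable f ∧ 0 ≤ f ∧ ∫⁻ x, ENNReal.ofReal (f x) ∂Q ≤ C)
    {Y : α → ℝ} (hY : Y ∈ scSet P S) : ∫⁻ x, ENNReal.ofReal (Y x) ∂Q ≤ C := by
  obtain ⟨-, Z, hZ, hYZ⟩ := hY
  obtain ⟨-, -, hZC⟩ := convexHull_min hS (convex_setOf_lintegral_ofReal_le Q C) hZ
  exact (lintegral_mono_ae <| Eventually.mono (hQP.ae_le hYZ) fun x hx =>
    ENNReal.ofReal_le_ofReal hx).trans hZC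

theorem lintegral_ofReal_posPart_sub_le (μ : Measure α) (X : α → ℝ) {c : ℝ} (hc : 0 ≤ c) :
    ∫⁻ x, ENNReal.ofReal (max (X x - c) 0) ∂μ ≤ ∫⁻ x in {x | c < X x}, ENNReal.ofReal (X x) ∂μ := by
  refine (lintegral_mono fun x => ?_).trans (lintegral_indicator_le _ _)
  by_cases h : c < X x
  · rw [Set.indicator_of_mem (show x ∈ {x | c < X x} from h)]
    exact ENNReal.ofReal_le_ofReal (max_le (by linarith) (by linarith))
  · rw [Set.indicator_of_notMem (show x ∉ {x | c < X x} from h), max_eq_right (by linarith),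
      ENNReal.ofReal_zero]

theorem lintegral_ofReal_le_of_mem_Oset {P Q : Measure α} (hQP : Q ≪ P) {𝒳 : Set (α → ℝ)}
    (h𝒳 : ∀ X ∈ 𝒳, Measurable X) {n : ℕ} {Y : α → ℝ} (hY : Y ∈ Oset P 𝒳 n) :
    ∫⁻ x, ENNReal.ofReal (Y x) ∂Q ≤
      ⨆ X ∈ 𝒳, ∫⁻ x in {x | (n : ℝ) < X x}, ENNReal.ofReal (X x) ∂Q := by
  refine lintegral_ofReal_le_of_mem_scSet hQP ?_ hY
  rintro _ ⟨X, hX, rfl⟩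
  exact ⟨((h𝒳 X hX).sub_const _).max measurable_const, fun x => le_max_right _ _,
    (lintegral_ofReal_posPart_sub_le Q X n.cast_nonneg).trans (le_iSup₂_of_le X hX le_rfl)⟩

end MeasureTheory

theorem stmt_5_general {Ω : Type*} [MeasurableSpace Ω] (P : Measure Ω)
    (𝒳 : Set (Ω → ℝ)) (h𝒳 : 𝒳 ⊆ L0pos P)
    (Q : Measure Ω) (hQP : Q ≪ P) (hPQ : P ≪ Q)
    (hUI : UnifInt Q 𝒳) :
    (∀ Zseq : ℕ → Ω → ℝ, (∀ n : ℕ, Zseq n ∈ Oset P 𝒳 n) →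
      ∀ Z : Ω → ℝ, TendstoInMeasure P Zseq atTop Z → ∀ᵐ ω ∂P, Z ω = 0) ∧
    (∀ Y : Ω → ℝ, (∀ n : ℕ, Y ∈ Oset P 𝒳 n) → ∀ᵐ ω ∂P, Y ω = 0) := by
  have hZero : ∀ Zseq : ℕ → Ω → ℝ, (∀ n : ℕ, Zseq n ∈ Oset P 𝒳 n) →
      ∀ Z : Ω → ℝ, TendstoInMeasure P Zseq atTop Z → ∀ᵐ ω ∂P, Z ω = 0 := by
    intro Zseq hZseq Z hlim
    have hint : Tendsto (fun n => ∫⁻ ω, ENNReal.ofReal (Zseq n ω) ∂Q) atTop (𝓝 0) :=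
      tendsto_of_tendsto_of_tendsto_of_le_of_le tendsto_const_nhds hUI (fun _ => zero_le)
        fun n => lintegral_ofReal_le_of_mem_Oset hQP (fun X hX => (h𝒳 hX).1) (hZseq n)
    have hnonpos := hPQ.ae_le <| ae_nonpos_of_tendstoInMeasure_of_lintegral_tendsto_zero hQP
      (fun n => (hZseq n).1.1) hlim hint
    filter_upwards [hnonpos, hlim.ae_nonneg fun n => (hZseq n).1.2] with ω hle hge
    exact le_antisymm hle hge
  exact ⟨hZero, fun Y hY => hZero _ hY Y (tendstoInMeasure_const P atTop Y)⟩

/-- If `𝒳` is uniformly `Q`-integrable for some `Q ~ P`, then any limit in measure of a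
sequence `(Zₙ)` with `Zₙ ∈ Oₙ^𝒳` vanishes a.e.; in particular `⋂ₙ Oₙ^𝒳 = {0}`. -/
theorem stmt_5 {Ω : Type*} [MeasurableSpace Ω] (P : Measure Ω) [IsProbabilityMeasure P]
    (𝒳 : Set (Ω → ℝ)) (h𝒳 : 𝒳 ⊆ L0pos P)
    (Q : Measure Ω) (hQ : IsProbabilityMeasure Q) (hQP : Q ≪ P) (hPQ : P ≪ Q)
    (hUI : UnifInt Q 𝒳) :
    (∀ Zseq : ℕ → Ω → ℝ, (∀ n : ℕ, Zseq n ∈ Oset P 𝒳 n) →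
      ∀ Z : Ω → ℝ, TendstoInMeasure P Zseq atTop Z → ∀ᵐ ω ∂P, Z ω = 0) ∧
    (∀ Y : Ω → ℝ, (∀ n : ℕ, Y ∈ Oset P 𝒳 n) → ∀ᵐ ω ∂P, Y ω = 0) :=
  stmt_5_general P 𝒳 h𝒳 Q hQP hPQ hUI
end

section
/- Let 𝒳 ⊆ L⁰. Then either 𝒳 fails to be uniformly Q-integrable for every probability measure Q ≪ P, or there exists a probability measure Q_𝒳 ≪ P with the following two properties: (i) 𝒳 is uniformly Q_𝒳-integrable, and (ii) whenever Q ≪ P is a probability measure mutually singular with Q_𝒳, the set 𝒳 fails to be uniformly Q-integrable. -/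
/-!
Exhaustion argument. Uniform integrability passes to countable mixtures `∑ wᵢ • Qᵢ` as soon as
`∑ wᵢ sup_{X ∈ 𝒳} E_{Qᵢ}|X| < ∞`, and for a probability `Qᵢ` under which `𝒳` is uniformly
integrable that supremum is finite, so suitable weights exist. Hence, among the probabilities
`Q ≪ P` making `𝒳` uniformly integrable, the `P`-measure of the support `{dQ/dP ≠ 0}` attains its
supremum at some `Q𝒳`. A `Q` of that class singular to `Q𝒳` has a support essentially disjoint
from that of `Q𝒳`, so a mixture of `Q` and `Q𝒳` would have a support of strictly larger measure.
-/

open MeasureTheory Filter Topology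

/-- `𝒳 ⊆ L⁰` is uniformly `Q`-integrable: `sup_{X ∈ 𝒳} E_Q[|X| 1_{|X| > n}] → 0`. -/
def UnifIntAbs {Ω : Type*} [MeasurableSpace Ω] (Q : Measure Ω) (𝒳 : Set (Ω → ℝ)) : Prop :=
  Tendsto (fun n : ℕ => ⨆ X ∈ 𝒳, ∫⁻ ω in {ω | (n : ℝ) < |X ω|}, ENNReal.ofReal (|X ω|) ∂Q)
    atTop (𝓝 0)

open scoped ENNReal
open Function

theorem ENNReal.tendsto_tsum_of_dominated_convergence {ι : Type*} {F : ℕ → ι → ℝ≥0∞}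
    {f bound : ι → ℝ≥0∞} (h_bound : ∀ n i, F n i ≤ bound i) (h_fin : ∑' i, bound i ≠ ∞)
    (h_lim : ∀ i, Tendsto (fun n => F n i) atTop (𝓝 (f i))) :
    Tendsto (fun n => ∑' i, F n i) atTop (𝓝 (∑' i, f i)) := by
  let _ : MeasurableSpace ι := ⊤
  simp only [← lintegral_count]
  exact tendsto_lintegral_of_dominated_convergence bound (fun _ => measurable_from_top)
    (fun n => ae_of_all _ (h_bound n)) (by rwa [lintegral_count]) (ae_of_all _ h_lim)

theorem ENNReal.exists_tsum_eq_one_tsum_mul_ne_top {ι : Type*} [Countable ι] [Nonempty ι]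
    (M : ι → ℝ≥0∞) (hM : ∀ i, M i ≠ ∞) :
    ∃ w : ι → ℝ≥0∞, (∀ i, w i ≠ 0) ∧ ∑' i, w i = 1 ∧ ∑' i, w i * M i ≠ ∞ := by
  obtain ⟨δ, hδ_pos, hδ⟩ := ENNReal.exists_pos_tsum_mul_lt_of_countable one_ne_zero
    (fun i => 1 + M i) fun i => ENNReal.add_ne_top.2 ⟨ENNReal.one_ne_top, hM i⟩
  have hδ_top : ∑' i, (1 + M i) * δ i ≠ ∞ := (hδ.trans ENNReal.one_lt_top).ne
  set c := ∑' i, (δ i : ℝ≥0∞)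
  have hc_top : c ≠ ∞ :=
    ne_top_of_le_ne_top hδ_top (ENNReal.tsum_le_tsum fun i => le_mul_of_one_le_left' le_self_add)
  have hc_zero : c ≠ 0 := fun h => (hδ_pos (Classical.arbitrary ι)).ne'
    (by simpa using ENNReal.tsum_eq_zero.1 h (Classical.arbitrary ι))
  refine ⟨fun i => δ i * c⁻¹, fun i => ?_, ?_, ?_⟩
  · exact mul_ne_zero (by simpa using (hδ_pos i).ne') (ENNReal.inv_ne_zero.2 hc_top)
  · rw [ENNReal.tsum_mul_right]
    exact ENNReal.mul_inv_cancel hc_zero hc_top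
  · refine ne_top_of_le_ne_top (ENNReal.mul_ne_top hδ_top (ENNReal.inv_ne_top.2 hc_zero)) ?_
    rw [← ENNReal.tsum_mul_right]
    refine ENNReal.tsum_le_tsum fun i => ?_
    rw [mul_right_comm, mul_comm _ (M i)]
    gcongr
    exact le_add_self

section

variable {Ω : Type*} [MeasurableSpace Ω] {P Q Q' R : Measure Ω}

namespace MeasureTheory.Measure

theorem measurableSet_support_rnDeriv : MeasurableSet (support (Q.rnDeriv P)) :=
  measurableSet_support (measurable_rnDeriv Q P)

theorem measure_support_rnDeriv_inter_eq_zero {s : Set Ω} (hs : Q s = 0) :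
    P (support (Q.rnDeriv P) ∩ s) = 0 := by
  have h : ∫⁻ ω in s, Q.rnDeriv P ω ∂P = 0 :=
    nonpos_iff_eq_zero.1 ((setLIntegral_rnDeriv_le s).trans hs.le)
  rw [lintegral_eq_zero_iff (measurable_rnDeriv Q P)] at h
  rw [← restrict_apply measurableSet_support_rnDeriv]
  exact ae_iff.1 h

theorem measure_compl_support_rnDeriv [Q.HaveLebesgueDecomposition P] (hQ : Q ≪ P) :
    Q (support (Q.rnDeriv P))ᶜ = 0 := by
  rw [compl_support]
  simpa [pos_iff_ne_zero] using ae_iff.1 (rnDeriv_pos hQ)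

theorem support_rnDeriv_ae_le [Q'.HaveLebesgueDecomposition P] (hQ : Q ≪ Q') (hQ' : Q' ≪ P) :
    support (Q.rnDeriv P) ≤ᵐ[P] support (Q'.rnDeriv P) :=
  ae_le_set.2 (measure_support_rnDeriv_inter_eq_zero (hQ (measure_compl_support_rnDeriv hQ')))

theorem measure_support_rnDeriv_ne_zero [Q.HaveLebesgueDecomposition P] (hQ : Q ≪ P)
    (hQ0 : Q ≠ 0) : P (support (Q.rnDeriv P)) ≠ 0 := fun h =>
  hQ0 (eq_zero_of_absolutelyContinuous_of_mutuallySingular hQ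
    ((rnDeriv_eq_zero Q P).1 (ae_iff.2 h)))

theorem MutuallySingular.aedisjoint_support_rnDeriv (h : Q ⟂ₘ Q') :
    AEDisjoint P (support (Q.rnDeriv P)) (support (Q'.rnDeriv P)) := by
  obtain ⟨S, -, hQS, hQ'S⟩ := h
  refine measure_mono_null (fun ω hω => ?_) (measure_union_null
    (measure_support_rnDeriv_inter_eq_zero (P := P) hQS)
    (measure_support_rnDeriv_inter_eq_zero (P := P) hQ'S))
  by_cases hS : ω ∈ S
  · exact Or.inl ⟨hω.1, hS⟩
  · exact Or.inr ⟨hω.2, hS⟩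

theorem MutuallySingular.measure_support_rnDeriv_add_le [R.HaveLebesgueDecomposition P]
    (h : Q ⟂ₘ Q') (hQ : Q ≪ R) (hQ' : Q' ≪ R) (hR : R ≪ P) :
    P (support (Q.rnDeriv P)) + P (support (Q'.rnDeriv P)) ≤ P (support (R.rnDeriv P)) := by
  rw [← measure_union₀ measurableSet_support_rnDeriv.nullMeasurableSet
    h.aedisjoint_support_rnDeriv]
  simpa using measure_mono_ae (ae_le_set_union (support_rnDeriv_ae_le hQ hR)
    (support_rnDeriv_ae_le hQ' hR))

theorem exists_forall_measure_support_rnDeriv_le [SigmaFinite P] {𝒢 : Set (Measure Ω)}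
    (hne : 𝒢.Nonempty) (h𝒢 : ∀ Q ∈ 𝒢, SFinite Q ∧ Q ≪ P)
    (hub : ∀ Qs : ℕ → Measure Ω, (∀ n, Qs n ∈ 𝒢) → ∃ Q ∈ 𝒢, ∀ n, Qs n ≪ Q) :
    ∃ Q ∈ 𝒢, ∀ Q' ∈ 𝒢, P (support (Q'.rnDeriv P)) ≤ P (support (Q.rnDeriv P)) := by
  obtain ⟨u, -, hu, huS⟩ :=
    exists_seq_tendsto_sSup (hne.image fun Q => P (support (Q.rnDeriv P))) (OrderTop.bddAbove _)
  choose Qs hQs hQsu using huS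
  obtain ⟨Q, hQ, hQsQ⟩ := hub Qs hQs
  have := (h𝒢 Q hQ).1
  refine ⟨Q, hQ, fun Q' hQ' => (le_sSup (Set.mem_image_of_mem _ hQ')).trans
    (le_of_tendsto' hu fun n => ?_)⟩
  rw [← hQsu n]
  exact measure_mono_ae (support_rnDeriv_ae_le (hQsQ n) (h𝒢 Q hQ).2)

end MeasureTheory.Measure

noncomputable def tailSup (Q : Measure Ω) (𝒳 : Set (Ω → ℝ)) (n : ℕ) : ℝ≥0∞ :=
  ⨆ X ∈ 𝒳, ∫⁻ ω in {ω | (n : ℝ) < |X ω|}, ENNReal.ofReal |X ω| ∂Q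

section tailSup

variable {𝒳 : Set (Ω → ℝ)}

theorem unifIntAbs_iff_tendsto_tailSup :
    UnifIntAbs Q 𝒳 ↔ Tendsto (tailSup Q 𝒳) atTop (𝓝 0) := Iff.rfl

theorem le_tailSup {X : Ω → ℝ} (hX : X ∈ 𝒳) (n : ℕ) :
    ∫⁻ ω in {ω | (n : ℝ) < |X ω|}, ENNReal.ofReal |X ω| ∂Q ≤ tailSup Q 𝒳 n :=
  le_iSup₂ (f := fun X _ => ∫⁻ ω in {ω | (n : ℝ) < |X ω|}, ENNReal.ofReal |X ω| ∂Q) X hX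

theorem antitone_tailSup : Antitone (tailSup Q 𝒳) := fun m n hmn =>
  iSup₂_mono fun X _ => lintegral_mono_set fun ω (hω : (n : ℝ) < |X ω|) =>
    show (m : ℝ) < |X ω| from lt_of_le_of_lt (Nat.cast_le.2 hmn) hω

theorem tailSup_zero_le (n : ℕ) : tailSup Q 𝒳 0 ≤ n * Q Set.univ + tailSup Q 𝒳 n := by
  refine iSup₂_le fun X hX => ?_
  calc ∫⁻ ω in {ω | ((0 : ℕ) : ℝ) < |X ω|}, ENNReal.ofReal |X ω| ∂Q
      ≤ ∫⁻ ω, ENNReal.ofReal |X ω| ∂Q := setLIntegral_le_lintegral _ _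
    _ ≤ ∫⁻ ω, n + {ω | (n : ℝ) < |X ω|}.indicator (fun ω => ENNReal.ofReal |X ω|) ω ∂Q := by
        refine lintegral_mono fun ω => ?_
        by_cases h : (n : ℝ) < |X ω|
        · simp [h]
        · simpa [h] using ENNReal.ofReal_le_ofReal (not_lt.1 h)
    _ = n * Q Set.univ +
          ∫⁻ ω, {ω | (n : ℝ) < |X ω|}.indicator (fun ω => ENNReal.ofReal |X ω|) ω ∂Q := by
        rw [lintegral_add_left measurable_const, lintegral_const]
    _ ≤ n * Q Set.univ + tailSup Q 𝒳 n := by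
        gcongr
        exact (lintegral_indicator_le _ _).trans (le_tailSup hX n)

theorem UnifIntAbs.tailSup_ne_top [IsFiniteMeasure Q] (h : UnifIntAbs Q 𝒳) (n : ℕ) :
    tailSup Q 𝒳 n ≠ ∞ := by
  obtain ⟨N, hN⟩ :=
    ((unifIntAbs_iff_tendsto_tailSup.1 h).eventually_lt_const zero_lt_one).exists
  refine ne_top_of_le_ne_top ?_ ((antitone_tailSup (Nat.zero_le n)).trans (tailSup_zero_le N))
  exact ENNReal.add_ne_top.2 ⟨ENNReal.mul_ne_top (ENNReal.natCast_ne_top N) (measure_ne_top _ _),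
    (hN.trans ENNReal.one_lt_top).ne⟩

theorem tailSup_sum_smul_le {ι : Type*} [Countable ι] (Qs : ι → Measure Ω) (w : ι → ℝ≥0∞)
    (n : ℕ) :
    tailSup (Measure.sum fun i => w i • Qs i) 𝒳 n ≤ ∑' i, w i * tailSup (Qs i) 𝒳 n := by
  refine iSup₂_le fun X hX => ?_
  simp only [Measure.restrict_sum_of_countable, lintegral_sum_measure, Measure.restrict_smul,
    lintegral_smul_measure]
  exact ENNReal.tsum_le_tsum fun i => mul_le_mul_right (le_tailSup hX n) (w i)

theorem UnifIntAbs.sum_smul {ι : Type*} [Countable ι] {Qs : ι → Measure Ω} {w : ι → ℝ≥0∞}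
    (hQs : ∀ i, UnifIntAbs (Qs i) 𝒳) (hw : ∀ i, w i ≠ ∞)
    (hsum : ∑' i, w i * tailSup (Qs i) 𝒳 0 ≠ ∞) :
    UnifIntAbs (Measure.sum fun i => w i • Qs i) 𝒳 := by
  have h : Tendsto (fun n => ∑' i, w i * tailSup (Qs i) 𝒳 n) atTop (𝓝 (∑' i, w i * 0)) :=
    ENNReal.tendsto_tsum_of_dominated_convergence
      (fun n i => mul_le_mul_right (antitone_tailSup (Nat.zero_le n)) (w i)) hsum
      fun i => ENNReal.Tendsto.const_mul (unifIntAbs_iff_tendsto_tailSup.1 (hQs i)) (.inr (hw i))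
  simp only [mul_zero, tsum_zero] at h
  exact unifIntAbs_iff_tendsto_tailSup.2 <| tendsto_of_tendsto_of_tendsto_of_le_of_le
    tendsto_const_nhds h (fun _ => zero_le) (tailSup_sum_smul_le Qs w)

theorem UnifIntAbs.exists_absolutelyContinuous_mixture {ι : Type*} [Countable ι] [Nonempty ι]
    {Qs : ι → Measure Ω}
    (hQs : ∀ i, IsProbabilityMeasure (Qs i) ∧ Qs i ≪ P ∧ UnifIntAbs (Qs i) 𝒳) :
    ∃ Q, (IsProbabilityMeasure Q ∧ Q ≪ P ∧ UnifIntAbs Q 𝒳) ∧ ∀ i, Qs i ≪ Q := by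
  obtain ⟨w, hw_pos, hw_one, hw_fin⟩ := ENNReal.exists_tsum_eq_one_tsum_mul_ne_top
    (fun i => tailSup (Qs i) 𝒳 0) fun i => have := (hQs i).1; (hQs i).2.2.tailSup_ne_top 0
  refine ⟨Measure.sum fun i => w i • Qs i, ⟨⟨?_⟩, ?_, ?_⟩, fun i => ?_⟩
  · simpa [Measure.sum_apply _ MeasurableSet.univ, fun i => (hQs i).1.measure_univ] using hw_one
  · exact Measure.absolutelyContinuous_sum_left fun i => (hQs i).2.1.smul_left _
  · exact UnifIntAbs.sum_smul (fun i => (hQs i).2.2)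
      (fun i => ENNReal.ne_top_of_tsum_ne_top (hw_one ▸ ENNReal.one_ne_top) i) hw_fin
  · exact Measure.absolutelyContinuous_sum_right i (Measure.absolutelyContinuous_smul (hw_pos i))

end tailSup

end

theorem stmt_7_general {Ω : Type*} [MeasurableSpace Ω] (P : Measure Ω) [IsProbabilityMeasure P]
    (𝒳 : Set (Ω → ℝ)) :
    (∀ Q : Measure Ω, IsProbabilityMeasure Q → Q ≪ P → ¬ UnifIntAbs Q 𝒳) ∨
    (∃ Q𝒳 : Measure Ω, IsProbabilityMeasure Q𝒳 ∧ Q𝒳 ≪ P ∧ UnifIntAbs Q𝒳 𝒳 ∧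
      ∀ Q : Measure Ω, IsProbabilityMeasure Q → Q ≪ P → Q ⟂ₘ Q𝒳 → ¬ UnifIntAbs Q 𝒳) := by
  set 𝒢 := {Q : Measure Ω | IsProbabilityMeasure Q ∧ Q ≪ P ∧ UnifIntAbs Q 𝒳}
  by_cases hne : 𝒢.Nonempty
  swap
  · exact Or.inl fun Q hQ hQP hQ𝒳 => hne ⟨Q, hQ, hQP, hQ𝒳⟩
  obtain ⟨Q𝒳, hQ𝒳, hmax⟩ := Measure.exists_forall_measure_support_rnDeriv_le hne
    (fun Q hQ => ⟨have := hQ.1; inferInstance, hQ.2.1⟩)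
    fun Qs hQs => UnifIntAbs.exists_absolutelyContinuous_mixture hQs
  refine Or.inr ⟨Q𝒳, hQ𝒳.1, hQ𝒳.2.1, hQ𝒳.2.2, fun Q hQ hQP hsing hQ_ui => ?_⟩
  obtain ⟨R, hR, hQR⟩ := UnifIntAbs.exists_absolutelyContinuous_mixture (Qs := ![Q, Q𝒳])
    (Fin.forall_fin_two.2 ⟨⟨hQ, hQP, hQ_ui⟩, hQ𝒳⟩)
  have := hR.1
  have hgain := hsing.symm.measure_support_rnDeriv_add_le (hQR 1) (hQR 0) hR.2.1
  have hQ_pos := Measure.measure_support_rnDeriv_ne_zero hQP (IsProbabilityMeasure.ne_zero Q)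
  exact (ENNReal.lt_add_right (measure_ne_top P _) hQ_pos).not_ge (hgain.trans (hmax R hR))

/-- Either `𝒳` fails to be uniformly `Q`-integrable for every probability `Q ≪ P`, or
there is a probability `Q𝒳 ≪ P` such that `𝒳` is uniformly `Q𝒳`-integrable and `𝒳`
fails to be uniformly `Q`-integrable for every probability `Q ≪ P` singular to `Q𝒳`. -/
theorem stmt_7 {Ω : Type*} [MeasurableSpace Ω] (P : Measure Ω) [IsProbabilityMeasure P]
    (𝒳 : Set (Ω → ℝ)) (hmeas : ∀ X ∈ 𝒳, Measurable X) :
    (∀ Q : Measure Ω, IsProbabilityMeasure Q → Q ≪ P → ¬ UnifIntAbs Q 𝒳) ∨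
    (∃ Q𝒳 : Measure Ω, IsProbabilityMeasure Q𝒳 ∧ Q𝒳 ≪ P ∧ UnifIntAbs Q𝒳 𝒳 ∧
      ∀ Q : Measure Ω, IsProbabilityMeasure Q → Q ≪ P → Q ⟂ₘ Q𝒳 → ¬ UnifIntAbs Q 𝒳) :=
  stmt_7_general P 𝒳
end

section
/- Let 𝒳 ⊆ L⁰ and suppose both probability measures Q₁ ≪ P and Q₂ ≪ P satisfy: 𝒳 is uniformly Qᵢ-integrable, and for every probability measure Q ≪ P mutually singular with Qᵢ, 𝒳 fails to be uniformly Q-integrable (i = 1, 2). Then Q₁ and Q₂ are mutually absolutely continuous. -/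
/-
If `Q₁ ≪ Q₂` fails, there is a measurable `A` with `Q₂ A = 0 < Q₁ A`. The probability
`Q₁[|A]` is dominated by `(Q₁ A)⁻¹ • Q₁`, so `𝒳` is uniformly `Q₁[|A]`-integrable, and it is
singular to `Q₂` and absolutely continuous w.r.t. `P`, contradicting the maximality of `Q₂`.
By symmetry `Q₂ ≪ Q₁` as well.
-/

open MeasureTheory Filter Topology

namespace UnifIntAbs

open ProbabilityTheory

variable {Ω : Type*} [MeasurableSpace Ω] {μ ν : Measure Ω} {𝒳 : Set (Ω → ℝ)}

theorem mono (h : UnifIntAbs μ 𝒳) (hle : ν ≤ μ) : UnifIntAbs ν 𝒳 :=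
  tendsto_of_tendsto_of_tendsto_of_le_of_le tendsto_const_nhds h (fun _ => zero_le)
    fun _ => iSup₂_mono fun _ _ => lintegral_mono' (Measure.restrict_mono subset_rfl hle) le_rfl

theorem smul (h : UnifIntAbs μ 𝒳) {c : ENNReal} (hc : c ≠ ⊤) : UnifIntAbs (c • μ) 𝒳 := by
  unfold UnifIntAbs at h ⊢
  simp only [Measure.restrict_smul, lintegral_smul_measure, smul_eq_mul, ← ENNReal.mul_iSup]
  simpa using ENNReal.Tendsto.const_mul h (Or.inr hc)

theorem cond (h : UnifIntAbs μ 𝒳) {s : Set Ω} (hs : μ s ≠ 0) : UnifIntAbs μ[|s] 𝒳 :=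
  (h.mono Measure.restrict_le_self).smul (ENNReal.inv_ne_top.mpr hs)

end UnifIntAbs

open ProbabilityTheory in
theorem absolutelyContinuous_of_unifIntAbs_of_forall_mutuallySingular {Ω : Type*}
    [MeasurableSpace Ω] {P Q₁ Q₂ : Measure Ω} [IsFiniteMeasure Q₁] {𝒳 : Set (Ω → ℝ)}
    (h1P : Q₁ ≪ P) (h1UI : UnifIntAbs Q₁ 𝒳)
    (h2sing : ∀ Q : Measure Ω, IsProbabilityMeasure Q → Q ≪ P → Q ⟂ₘ Q₂ → ¬ UnifIntAbs Q 𝒳) :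
    Q₁ ≪ Q₂ := by
  refine Measure.AbsolutelyContinuous.mk fun A hA hA2 => ?_
  by_contra hA1
  have hsing : Q₁[|A] ⟂ₘ Q₂ := ⟨Aᶜ, hA.compl, by simp [cond_apply hA], by simpa using hA2⟩
  exact h2sing _ (cond_isProbabilityMeasure hA1) (cond_absolutelyContinuous.trans h1P) hsing
    (h1UI.cond hA1)

theorem stmt_8_general {Ω : Type*} [MeasurableSpace Ω] (P : Measure Ω)
    (𝒳 : Set (Ω → ℝ))
    (Q₁ Q₂ : Measure Ω) (h1p : IsProbabilityMeasure Q₁) (h2p : IsProbabilityMeasure Q₂)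
    (h1P : Q₁ ≪ P) (h2P : Q₂ ≪ P)
    (h1UI : UnifIntAbs Q₁ 𝒳) (h2UI : UnifIntAbs Q₂ 𝒳)
    (h1sing : ∀ Q : Measure Ω, IsProbabilityMeasure Q → Q ≪ P → Q ⟂ₘ Q₁ → ¬ UnifIntAbs Q 𝒳)
    (h2sing : ∀ Q : Measure Ω, IsProbabilityMeasure Q → Q ≪ P → Q ⟂ₘ Q₂ → ¬ UnifIntAbs Q 𝒳) :
    Q₁ ≪ Q₂ ∧ Q₂ ≪ Q₁ :=
  ⟨absolutelyContinuous_of_unifIntAbs_of_forall_mutuallySingular h1P h1UI h2sing,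
    absolutelyContinuous_of_unifIntAbs_of_forall_mutuallySingular h2P h2UI h1sing⟩

/-- Two probabilities with the decomposition property of Proposition `decomposition` are
necessarily equivalent. -/
theorem stmt_8 {Ω : Type*} [MeasurableSpace Ω] (P : Measure Ω) [IsProbabilityMeasure P]
    (𝒳 : Set (Ω → ℝ)) (hmeas : ∀ X ∈ 𝒳, Measurable X)
    (Q₁ Q₂ : Measure Ω) (h1p : IsProbabilityMeasure Q₁) (h2p : IsProbabilityMeasure Q₂)
    (h1P : Q₁ ≪ P) (h2P : Q₂ ≪ P)
    (h1UI : UnifIntAbs Q₁ 𝒳) (h2UI : UnifIntAbs Q₂ 𝒳)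
    (h1sing : ∀ Q : Measure Ω, IsProbabilityMeasure Q → Q ≪ P → Q ⟂ₘ Q₁ → ¬ UnifIntAbs Q 𝒳)
    (h2sing : ∀ Q : Measure Ω, IsProbabilityMeasure Q → Q ≪ P → Q ⟂ₘ Q₂ → ¬ UnifIntAbs Q 𝒳) :
    Q₁ ≪ Q₂ ∧ Q₂ ≪ Q₁ :=
  stmt_8_general P 𝒳 Q₁ Q₂ h1p h2p h1P h2P h1UI h2UI h1sing h2sing
end

section
/- Suppose the probability space (Ω, F, P) is not purely atomic, i.e. there exists A ∈ F with P(A) > 0 such that the restriction of P to A is atomless. Then there exists a sequence (Xₙ) in L⁰₊ converging to 0 in measure such that the constant sequence (Yₙ) with Yₙ = 1_A for all n is a sequence of forward convex combinations of (Xₙ); in particular, forward convex combinations of a null sequence in L⁰₊ need not converge to 0 in measure. -/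
/-! For every `m`, `A` splits into finitely many measurable pieces `D m i`, `i < N m`, of measure
at most `1 / m`. They are produced greedily: each step removes from the remainder a subset of
measure `≤ 1 / m` that is at least half as large as any such subset. The removed pieces are
disjoint, so their measures tend to zero, hence the part of `A` that is never removed contains no
subset of small positive measure and is null by atomlessness; so some remainder is already small
and is removed whole.

Then `1_A` is the average of the functions `N m • 1_{D m i}`, `i < N m`. Listing all of these
along the Cantor pairing gives a sequence whose supports have measures tending to zero, while
every tail contains a whole block `m`. -/

open MeasureTheory Filter Topology
open scoped ENNReal

section GreedyRemainder

variable {α : Type*} (F : Set α → Set α) (A : Set α)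

def greedyRemainder : ℕ → Set α
  | 0 => A
  | n + 1 => greedyRemainder n \ F (greedyRemainder n)

theorem greedyRemainder_antitone : Antitone (greedyRemainder F A) :=
  antitone_nat_of_succ_le fun _ => Set.sdiff_subset

theorem greedyRemainder_subset (n : ℕ) : greedyRemainder F A n ⊆ A :=
  greedyRemainder_antitone F A (Nat.zero_le n)

theorem disjoint_greedyRemainder {i j : ℕ} (hij : i < j) :
    Disjoint (F (greedyRemainder F A i)) (greedyRemainder F A j) :=
  Set.disjoint_sdiff_right.mono_right (greedyRemainder_antitone F A hij)

variable {F}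

theorem pairwise_disjoint_greedyRemainder (hF : ∀ S, F S ⊆ S) :
    Pairwise (Function.onFun Disjoint fun n => F (greedyRemainder F A n)) := by
  intro i j hij
  rcases hij.lt_or_gt with h | h
  · exact (disjoint_greedyRemainder F A h).mono_right (hF _)
  · exact ((disjoint_greedyRemainder F A h).mono_right (hF _)).symm

theorem biUnion_union_greedyRemainder (hF : ∀ S, F S ⊆ S) (n : ℕ) :
    (⋃ i < n, F (greedyRemainder F A i)) ∪ greedyRemainder F A n = A := by
  induction n with
  | zero => simp [greedyRemainder]
  | succ n ih =>
    rw [Set.biUnion_lt_succ, Set.union_assoc, greedyRemainder,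
      Set.union_sdiff_cancel (hF _), ih]

theorem measurableSet_greedyRemainder [MeasurableSpace α] (hA : MeasurableSet A)
    (hF : ∀ S, MeasurableSet S → MeasurableSet (F S)) (n : ℕ) :
    MeasurableSet (greedyRemainder F A n) := by
  induction n with
  | zero => exact hA
  | succ n ih => exact ih.diff (hF _ ih)

end GreedyRemainder

def AtomlessOn {Ω : Type*} [MeasurableSpace Ω] (μ : Measure Ω) (A : Set Ω) : Prop :=
  ∀ B : Set Ω, MeasurableSet B → B ⊆ A → 0 < μ B →
    ∃ C : Set Ω, MeasurableSet C ∧ C ⊆ B ∧ 0 < μ C ∧ μ C < μ B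

section Atomless

variable {Ω : Type*} [MeasurableSpace Ω] {μ : Measure Ω} {A B : Set Ω}

theorem AtomlessOn.exists_subset_two_mul_le (h : AtomlessOn μ A) (hB : MeasurableSet B)
    (hBA : B ⊆ A) (hB0 : 0 < μ B) :
    ∃ C ⊆ B, MeasurableSet C ∧ 0 < μ C ∧ 2 * μ C ≤ μ B := by
  obtain ⟨C, hC, hCB, hC0, hClt⟩ := h B hB hBA hB0
  have hsplit : μ C + μ (B \ C) = μ B := by
    rw [measure_add_sdiff hC.nullMeasurableSet, Set.union_eq_right.2 hCB]
  by_cases hle : 2 * μ C ≤ μ B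
  · exact ⟨C, hCB, hC, hC0, hle⟩
  refine ⟨B \ C, Set.sdiff_subset, hB.diff hC, pos_iff_ne_zero.2 fun h0 => ?_, ?_⟩
  · rw [h0, add_zero] at hsplit
    exact hClt.ne hsplit
  · have hle' : μ (B \ C) ≤ μ C := by
      by_contra! hlt
      exact hle (by rw [two_mul, ← hsplit]; gcongr)
    rw [two_mul, ← hsplit]
    gcongr

theorem AtomlessOn.exists_subset_two_pow_mul_le (h : AtomlessOn μ A) (hB : MeasurableSet B)
    (hBA : B ⊆ A) (hB0 : 0 < μ B) (n : ℕ) :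
    ∃ C ⊆ B, MeasurableSet C ∧ 0 < μ C ∧ 2 ^ n * μ C ≤ μ B := by
  induction n with
  | zero => exact ⟨B, subset_rfl, hB, hB0, by simp⟩
  | succ n ih =>
    obtain ⟨C, hCB, hC, hC0, hCle⟩ := ih
    obtain ⟨D, hDC, hD, hD0, hDle⟩ := h.exists_subset_two_mul_le hC (hCB.trans hBA) hC0
    refine ⟨D, hDC.trans hCB, hD, hD0, ?_⟩
    calc 2 ^ (n + 1) * μ D = 2 ^ n * (2 * μ D) := by ring
      _ ≤ 2 ^ n * μ C := by gcongr
      _ ≤ μ B := hCle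

theorem AtomlessOn.exists_subset_le (h : AtomlessOn μ A) (hB : MeasurableSet B) (hBA : B ⊆ A)
    (hB0 : 0 < μ B) (hBtop : μ B ≠ ∞) {ε : ℝ≥0∞} (hε : 0 < ε) :
    ∃ C ⊆ B, MeasurableSet C ∧ 0 < μ C ∧ μ C ≤ ε := by
  obtain ⟨n, hn⟩ := ENNReal.exists_nat_mul_gt hε.ne' hBtop
  obtain ⟨C, hCB, hC, hC0, hCle⟩ := h.exists_subset_two_pow_mul_le hB hBA hB0 n
  refine ⟨C, hCB, hC, hC0, ?_⟩
  have hn2 : (n : ℝ≥0∞) ≤ 2 ^ n := by exact_mod_cast n.lt_two_pow_self.le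
  have : 2 ^ n * μ C < 2 ^ n * ε := calc
    2 ^ n * μ C ≤ μ B := hCle
    _ < n * ε := hn
    _ ≤ 2 ^ n * ε := by gcongr
  exact ((ENNReal.mul_lt_mul_iff_right (by simp) (by simp)).1 this).le

theorem exists_subset_forall_le_two_mul [IsFiniteMeasure μ] (R : Set Ω) (ε : ℝ≥0∞) :
    ∃ C ⊆ R, MeasurableSet C ∧ μ C ≤ ε ∧
      ∀ C' ⊆ R, MeasurableSet C' → μ C' ≤ ε → μ C' ≤ 2 * μ C := by
  set s := ⨆ (C' : Set Ω) (_ : C' ⊆ R ∧ MeasurableSet C' ∧ μ C' ≤ ε), μ C'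
  suffices ∃ C ⊆ R, MeasurableSet C ∧ μ C ≤ ε ∧ s ≤ 2 * μ C by
    obtain ⟨C, hCR, hC, hCε, hs⟩ := this
    exact ⟨C, hCR, hC, hCε, fun C' hC'R hC' hC'ε =>
      (le_iSup₂ (f := fun C' (_ : C' ⊆ R ∧ MeasurableSet C' ∧ μ C' ≤ ε) => μ C') C'
        ⟨hC'R, hC', hC'ε⟩).trans hs⟩
  rcases eq_or_ne s 0 with hs0 | hs0
  · exact ⟨∅, Set.empty_subset _, .empty, by simp, by simp [hs0]⟩
  have hstop : s ≠ ∞ := ne_top_of_le_ne_top (measure_ne_top μ Set.univ)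
    (iSup₂_le fun _ _ => measure_mono (Set.subset_univ _))
  obtain ⟨C, ⟨hCR, hC, hCε⟩, hlt⟩ :
      ∃ C, (C ⊆ R ∧ MeasurableSet C ∧ μ C ≤ ε) ∧ s / 2 < μ C := by
    have hlt := ENNReal.half_lt_self hs0 hstop
    simpa only [s, lt_iSup_iff, exists_prop] using hlt
  refine ⟨C, hCR, hC, hCε, ?_⟩
  calc s = s / 2 + s / 2 := (ENNReal.add_halves s).symm
    _ ≤ μ C + μ C := by gcongr
    _ = 2 * μ C := (two_mul _).symm

theorem AtomlessOn.measure_iInter_greedyRemainder [IsFiniteMeasure μ] (h : AtomlessOn μ A)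
    (hA : MeasurableSet A) {F : Set Ω → Set Ω} {ε : ℝ≥0∞} (hε : 0 < ε)
    (hFsub : ∀ S, F S ⊆ S) (hFmeas : ∀ S, MeasurableSet S → MeasurableSet (F S))
    (hFmax : ∀ S C, C ⊆ S → MeasurableSet C → μ C ≤ ε → μ C ≤ 2 * μ (F S)) :
    μ (⋂ n, greedyRemainder F A n) = 0 := by
  set R := greedyRemainder F A
  have hRmeas := measurableSet_greedyRemainder A hA hFmeas
  have hpieces : Tendsto (fun n => 2 * μ (F (R n))) atTop (𝓝 0) := by
    have hsum : ∑' n, μ (F (R n)) ≠ ∞ := by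
      rw [← measure_iUnion (pairwise_disjoint_greedyRemainder A hFsub)
        fun n => hFmeas _ (hRmeas n)]
      exact measure_ne_top μ _
    simpa using ENNReal.Tendsto.const_mul (ENNReal.tendsto_atTop_zero_of_tsum_ne_top hsum)
      (Or.inr ENNReal.ofNat_ne_top)
  by_contra hne
  obtain ⟨C, hCsub, hC, hC0, hCε⟩ := h.exists_subset_le (.iInter hRmeas)
    ((Set.iInter_subset R 0).trans (greedyRemainder_subset F A 0)) (pos_iff_ne_zero.2 hne)
    (measure_ne_top μ _) hε
  have hCle : μ C ≤ 0 := ge_of_tendsto' hpieces fun n =>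
    hFmax _ C (hCsub.trans (Set.iInter_subset R n)) hC hCε
  exact hC0.ne' (le_antisymm hCle zero_le)

theorem AtomlessOn.exists_finite_partition [IsFiniteMeasure μ] (h : AtomlessOn μ A)
    (hA : MeasurableSet A) {ε : ℝ≥0∞} (hε : 0 < ε) :
    ∃ N, 0 < N ∧ ∃ D : ℕ → Set Ω, (∀ i, MeasurableSet (D i)) ∧ (∀ i, μ (D i) ≤ ε) ∧
      Pairwise (Function.onFun Disjoint D) ∧ (∀ i, N ≤ i → D i = ∅) ∧ ⋃ i < N, D i = A := by
  classical
  choose G hGsub hGmeas hGε hGmax using fun R => exists_subset_forall_le_two_mul (μ := μ) R ε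
  -- Once the remainder is small it is removed whole, so the greedy process stops.
  let F : Set Ω → Set Ω := fun S => if μ S ≤ ε then S else G S
  have hFsub : ∀ S, F S ⊆ S := fun S => by
    dsimp only [F]; split_ifs
    exacts [subset_rfl, hGsub S]
  have hFmeas : ∀ S, MeasurableSet S → MeasurableSet (F S) := fun S hS => by
    dsimp only [F]; split_ifs
    exacts [hS, hGmeas S]
  have hFε : ∀ S, μ (F S) ≤ ε := fun S => by
    dsimp only [F]; split_ifs with hS
    exacts [hS, hGε S]
  have hFmax : ∀ S C, C ⊆ S → MeasurableSet C → μ C ≤ ε → μ C ≤ 2 * μ (F S) := by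
    intro S C hCS hC hCε
    dsimp only [F]; split_ifs
    · exact (measure_mono hCS).trans (le_mul_of_one_le_left' one_le_two)
    · exact hGmax S C hCS hC hCε
  set R := greedyRemainder F A
  have hRmeas := measurableSet_greedyRemainder A hA hFmeas
  obtain ⟨N, hN⟩ : ∃ N, μ (R N) ≤ ε := by
    have hlim := tendsto_measure_iInter_atTop (fun n => (hRmeas n).nullMeasurableSet)
      (greedyRemainder_antitone F A) ⟨0, measure_ne_top μ _⟩
    rw [h.measure_iInter_greedyRemainder hA hε hFsub hFmeas hFmax] at hlim
    exact (ENNReal.tendsto_nhds_zero.1 hlim ε hε).exists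
  have hRN : R (N + 1) = ∅ := by simp [R, greedyRemainder, F, hN]
  refine ⟨N + 1, N.succ_pos, fun i => F (R i), fun i => hFmeas _ (hRmeas i), fun i => hFε _,
    pairwise_disjoint_greedyRemainder A hFsub, fun i hi => ?_, ?_⟩
  · exact Set.subset_eq_empty ((hFsub _).trans (hRN ▸ greedyRemainder_antitone F A hi)) rfl
  · have hunion := biUnion_union_greedyRemainder A hFsub (N + 1)
    rwa [show greedyRemainder F A (N + 1) = ∅ from hRN, Set.union_empty] at hunion

end Atomless

theorem Finset.sum_mem_convexHull_card_smul {𝕜 ι E : Type*} [Field 𝕜] [LinearOrder 𝕜]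
    [IsStrictOrderedRing 𝕜] [AddCommGroup E] [Module 𝕜 E] {s : Finset ι} (hs : s.Nonempty)
    (f : ι → E) : ∑ i ∈ s, f i ∈ convexHull 𝕜 ((fun i => (s.card : 𝕜) • f i) '' s) := by
  have hcard : (s.card : 𝕜) ≠ 0 := Nat.cast_ne_zero.2 hs.card_pos.ne'
  have hmem := s.centerMass_mem_convexHull (s := (fun i => (s.card : 𝕜) • f i) '' s)
    (w := fun _ => (1 : 𝕜))
    (z := fun i => (s.card : 𝕜) • f i) (fun _ _ => zero_le_one) (by simpa using hs.card_pos)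
    fun i hi => ⟨i, hi, rfl⟩
  convert hmem using 1
  simp [Finset.centerMass, ← Finset.smul_sum, smul_smul, hcard]

theorem tendsto_uncurry_cofinite_of_le {u : ℕ → ℕ → ℝ≥0∞} {ε : ℕ → ℝ≥0∞} {N : ℕ → ℕ}
    (hε : Tendsto ε atTop (𝓝 0)) (hu : ∀ m i, u m i ≤ ε m) (hN : ∀ m i, N m ≤ i → u m i = 0) :
    Tendsto (Function.uncurry u) cofinite (𝓝 0) := by
  refine ENNReal.tendsto_nhds_zero.2 fun δ hδ => eventually_cofinite.2 ?_
  obtain ⟨M, hM⟩ := (ENNReal.tendsto_nhds_zero.1 hε δ hδ).exists_forall_of_atTop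
  refine ((Set.finite_Iio M).biUnion fun m _ => (Set.finite_Iio (N m)).image (Prod.mk m)).subset ?_
  rintro ⟨m, i⟩ hmi
  simp only [Set.mem_ofPred_eq, Function.uncurry_apply_pair, not_le] at hmi
  have hm : m < M := by
    by_contra! h
    exact (hmi.trans_le ((hu m i).trans (hM m h))).false
  have hi : i < N m := by
    by_contra! h
    simp [hN m i h] at hmi
  exact Set.mem_biUnion hm ⟨i, hi, rfl⟩

theorem indicator_mem_convexHull_of_partition {Ω E : Type*} [AddCommGroup E] [Module ℝ E]
    {A : Set Ω} {D : ℕ → Set Ω} {N : ℕ} (hN : 0 < N) (hD : Pairwise (Function.onFun Disjoint D))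
    (hDA : ⋃ i < N, D i = A) (f : Ω → E) :
    A.indicator f ∈ convexHull ℝ ((fun i => (N : ℝ) • (D i).indicator f) '' Finset.range N) := by
  have hsum : A.indicator f = ∑ i ∈ Finset.range N, (D i).indicator f := by
    ext ω
    rw [Finset.sum_apply, ← Finset.indicator_biUnion_apply _ _ (hD.set_pairwise _)]
    simp [hDA]
  simpa [hsum] using Finset.sum_mem_convexHull_card_smul (Finset.nonempty_range_iff.2 hN.ne')
    fun i => (D i).indicator f

theorem tendstoInMeasure_zero_of_support_subset {Ω ι E : Type*} [MeasurableSpace Ω]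
    {μ : Measure Ω} [PseudoEMetricSpace E] [Zero E] {l : Filter ι} {X : ι → Ω → E}
    {S : ι → Set Ω} (hXS : ∀ i, Function.support (X i) ⊆ S i)
    (hS : Tendsto (fun i => μ (S i)) l (𝓝 0)) : TendstoInMeasure μ X l 0 := by
  refine fun δ hδ => tendsto_of_tendsto_of_tendsto_of_le_of_le tendsto_const_nhds hS
    (fun _ => zero_le) fun i => measure_mono fun ω hω => hXS i fun hX0 => ?_
  simp [hX0] at hω
  exact hδ.ne' hω

theorem stmt_11_general {Ω : Type*} [MeasurableSpace Ω] (P : Measure Ω) [IsProbabilityMeasure P]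
    (A : Set Ω) (hA : MeasurableSet A)
    (hatomless : ∀ B : Set Ω, MeasurableSet B → B ⊆ A → 0 < P B →
      ∃ C : Set Ω, MeasurableSet C ∧ C ⊆ B ∧ 0 < P C ∧ P C < P B) :
    ∃ X : ℕ → Ω → ℝ, (∀ n, X n ∈ L0pos P) ∧
      TendstoInMeasure P X atTop (fun _ => (0 : ℝ)) ∧
      ∀ n : ℕ, A.indicator (fun _ => (1 : ℝ)) ∈ convexHull ℝ {g | ∃ k, n ≤ k ∧ g = X k} := by
  choose N hN D hDmeas hDle hDdisj hDempty hDunion using fun m : ℕ =>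
    AtomlessOn.exists_finite_partition (μ := P) hatomless hA (ε := (m : ℝ≥0∞)⁻¹)
      (ENNReal.inv_pos.2 (ENNReal.natCast_ne_top m))
  let X : ℕ → Ω → ℝ := fun n =>
    (N n.unpair.1 : ℝ) • (D n.unpair.1 n.unpair.2).indicator (fun _ => 1)
  refine ⟨X, fun n => ⟨(measurable_const.indicator (hDmeas _ _)).const_smul _,
    .of_forall fun ω => ?_⟩, ?_, fun n => ?_⟩
  · exact smul_nonneg (Nat.cast_nonneg (α := ℝ) _) (Set.indicator_nonneg (fun _ _ => zero_le_one) ω)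
  · refine tendstoInMeasure_zero_of_support_subset
      (fun n => (Function.support_const_smul_subset _ _).trans Set.support_indicator_subset) ?_
    rw [← Nat.cofinite_eq_atTop]
    exact (tendsto_uncurry_cofinite_of_le (N := N) ENNReal.tendsto_inv_nat_nhds_zero hDle
      fun m i hi => by simp [hDempty m i hi]).comp Nat.pairEquiv.symm.injective.tendsto_cofinite
  · refine convexHull_mono ?_
      (indicator_mem_convexHull_of_partition (hN n) (hDdisj n) (hDunion n) _)
    rintro _ ⟨i, -, rfl⟩
    exact ⟨Nat.pair n i, Nat.left_le_pair n i, by simp [X]⟩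

/-- If `A` has positive measure and `P` restricted to `A` is atomless, then there is a
null (in measure) sequence in `L⁰₊` admitting the constant sequence `1_A` as a sequence
of forward convex combinations. -/
theorem stmt_11 {Ω : Type*} [MeasurableSpace Ω] (P : Measure Ω) [IsProbabilityMeasure P]
    (A : Set Ω) (hA : MeasurableSet A) (hApos : 0 < P A)
    (hatomless : ∀ B : Set Ω, MeasurableSet B → B ⊆ A → 0 < P B →
      ∃ C : Set Ω, MeasurableSet C ∧ C ⊆ B ∧ 0 < P C ∧ P C < P B) :
    ∃ X : ℕ → Ω → ℝ, (∀ n, X n ∈ L0pos P) ∧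
      TendstoInMeasure P X atTop (fun _ => (0 : ℝ)) ∧
      ∀ n : ℕ, A.indicator (fun _ => (1 : ℝ)) ∈ convexHull ℝ {g | ∃ k, n ≤ k ∧ g = X k} :=
  stmt_11_general P A hA hatomless
end

section
/- Let D ⊆ L⁰₊ be a solid set whose closure under convergence in measure is all of L⁰₊, i.e. every element of L⁰₊ is the limit in measure of some D-valued sequence. Then for every ε ∈ (0,1) there exists g ∈ L⁰₊ with P(g = 0) < ε such that a·g ∈ D for every real a ≥ 0. -/
open MeasureTheory Filter Topology

open scoped ENNReal

/-! Density in measure lets one pick `Xₙ ∈ D` with `P(Xₙ < n) < δₙ`, where `∑ δₙ < ε`.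
On `A = ⋂ₙ {n ≤ Xₙ}` every `Xₙ` dominates `n · 1_A`, so by solidity the whole ray through
`g = 1_A` lies in `D`, while `P(g = 0) = P(Aᶜ) ≤ ∑ P(Xₙ < n) < ε`. -/

section

variable {Ω : Type*} [MeasurableSpace Ω] {P : Measure Ω}

theorem indicator_one_mem_L0pos {A : Set Ω} (hA : MeasurableSet A) :
    A.indicator 1 ∈ L0pos P :=
  ⟨measurable_one.indicator hA, Eventually.of_forall (Set.indicator_nonneg fun _ _ => zero_le_one)⟩

theorem const_mul_mem_L0pos {X : Ω → ℝ} (hX : X ∈ L0pos P) {a : ℝ} (ha : 0 ≤ a) :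
    (fun ω => a * X ω) ∈ L0pos P :=
  ⟨measurable_const.mul hX.1, hX.2.mono fun _ hω => mul_nonneg ha hω⟩

theorem MeasureTheory.TendstoInMeasure.eventually_measure_lt_lt_const {ι : Type*} {l : Filter ι}
    {f : ι → Ω → ℝ} {c r : ℝ} (hf : TendstoInMeasure P f l (fun _ => c)) (hr : r < c)
    {δ : ℝ≥0∞} (hδ : 0 < δ) : ∀ᶠ i in l, P {ω | f i ω < r} < δ := by
  have hdist := tendstoInMeasure_iff_dist.1 hf (c - r) (sub_pos.2 hr)
  filter_upwards [hdist.eventually_lt_const hδ] with i hi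
  refine lt_of_le_of_lt (measure_mono fun ω (hω : f i ω < r) => ?_) hi
  rw [Set.mem_ofPred_eq, Real.dist_eq, abs_sub_comm]
  exact (sub_le_sub_left hω.le c).trans (le_abs_self _)

theorem exists_mem_measure_lt_lt_of_dense {D : Set (Ω → ℝ)}
    (hdense : ∀ Z ∈ L0pos P,
      ∃ f : ℕ → Ω → ℝ, (∀ n, f n ∈ D) ∧ TendstoInMeasure P f atTop Z)
    (r : ℝ) {δ : ℝ≥0∞} (hδ : 0 < δ) : ∃ X ∈ D, P {ω | X ω < r} < δ := by
  have hc : (fun _ : Ω => max r 0 + 1) ∈ L0pos P :=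
    ⟨measurable_const, Eventually.of_forall fun _ => by positivity⟩
  obtain ⟨f, hfD, hf⟩ := hdense _ hc
  obtain ⟨k, hk⟩ :=
    (hf.eventually_measure_lt_lt_const ((le_max_left r 0).trans_lt (lt_add_one _)) hδ).exists
  exact ⟨f k, hfD k, hk⟩

theorem Solid.mul_indicator_mem {D : Set (Ω → ℝ)} (hD : D ⊆ L0pos P) (hsolid : Solid P D)
    {A : Set Ω} (hA : MeasurableSet A) (hbig : ∀ n : ℕ, ∃ X ∈ D, ∀ ω ∈ A, (n : ℝ) ≤ X ω)
    {a : ℝ} (ha : 0 ≤ a) : (fun ω => a * A.indicator 1 ω) ∈ D := by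
  obtain ⟨n, han⟩ := exists_nat_ge a
  obtain ⟨X, hXD, hXA⟩ := hbig n
  refine hsolid X hXD _ (const_mul_mem_L0pos (indicator_one_mem_L0pos hA) ha) ?_
  filter_upwards [(hD hXD).2] with ω hX0
  by_cases hω : ω ∈ A
  · simpa [hω] using han.trans (hXA ω hω)
  · simpa [hω] using hX0

end

theorem stmt_12_general {Ω : Type*} [MeasurableSpace Ω] (P : Measure Ω)
    (D : Set (Ω → ℝ)) (hD : D ⊆ L0pos P) (hsolid : Solid P D)
    (hdense : ∀ Z ∈ L0pos P,
      ∃ f : ℕ → Ω → ℝ, (∀ n, f n ∈ D) ∧ TendstoInMeasure P f atTop Z)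
    (ε : ℝ) (hε : ε ∈ Set.Ioo (0 : ℝ) 1) :
    ∃ g ∈ L0pos P, P {ω | g ω = 0} < ENNReal.ofReal ε ∧
      ∀ a : ℝ, 0 ≤ a → (fun ω => a * g ω) ∈ D := by
  obtain ⟨δ, hδ, hδε⟩ :=
    ENNReal.exists_pos_sum_of_countable (ENNReal.ofReal_pos.2 hε.1).ne' ℕ
  choose X hXD hX using fun n : ℕ =>
    exists_mem_measure_lt_lt_of_dense hdense n (ENNReal.coe_pos.2 (hδ n))
  set A := ⋂ n : ℕ, {ω | (n : ℝ) ≤ X n ω}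
  have hA : MeasurableSet A :=
    MeasurableSet.iInter fun n => measurableSet_le measurable_const (hD (hXD n)).1
  have hzero : {ω | A.indicator (1 : Ω → ℝ) ω = 0} = ⋃ n : ℕ, {ω | X n ω < n} := by
    ext ω
    by_cases hω : ω ∈ A <;> simp_all [A]
  refine ⟨A.indicator 1, indicator_one_mem_L0pos hA, ?_, fun a ha => hsolid.mul_indicator_mem hD hA (fun n => ⟨X n, hXD n, fun ω hω =>
      Set.mem_iInter.1 hω n⟩) ha⟩
  calc P {ω | A.indicator (1 : Ω → ℝ) ω = 0} ≤ ∑' n : ℕ, P {ω | X n ω < n} :=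
        hzero ▸ measure_iUnion_le _
    _ ≤ ∑' n : ℕ, (δ n : ℝ≥0∞) := ENNReal.tsum_le_tsum fun n => (hX n).le
    _ < ENNReal.ofReal ε := hδε

/-- A solid `D ⊆ L⁰₊` whose closure in measure is all of `L⁰₊` contains rays through
functions vanishing on sets of arbitrarily small probability. -/
theorem stmt_12 {Ω : Type*} [MeasurableSpace Ω] (P : Measure Ω) [IsProbabilityMeasure P]
    (D : Set (Ω → ℝ)) (hD : D ⊆ L0pos P) (hsolid : Solid P D)
    (hdense : ∀ Z ∈ L0pos P,
      ∃ f : ℕ → Ω → ℝ, (∀ n, f n ∈ D) ∧ TendstoInMeasure P f atTop Z)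
    (ε : ℝ) (hε : ε ∈ Set.Ioo (0 : ℝ) 1) :
    ∃ g ∈ L0pos P, P {ω | g ω = 0} < ENNReal.ofReal ε ∧
      ∀ a : ℝ, 0 ≤ a → (fun ω => a * g ω) ∈ D :=
  stmt_12_general P D hD hsolid hdense ε hε
end

section
/- Let (Sₙ)ₙ∈ℕ be a sequence of solid subsets of L⁰₊. Then there exists Y ∈ ⋂ₙ Sₙ with P(Y > 0) > 0 if and only if there exists Z with P(Z > 0) > 0 lying in ⋂ₙ S̄ₙ, where S̄ₙ denotes the closure of Sₙ under convergence in measure (the set of limits in measure of Sₙ-valued sequences). -/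
open MeasureTheory Filter Topology

/-!
If `Z` lies in the closure in measure of every `Sₙ` and `P(Z ≥ ε) > 0`, pick `gₙ ∈ Sₙ` with
`P(|gₙ - Z| ≥ ε/2) < δₙ`, where `∑ δₙ < P(Z ≥ ε)`. Then all `gₙ ≥ ε/2` simultaneously on a set
`C` of positive measure, and by solidity `(ε/2) 𝟙_C` lies in every `Sₙ`. Taking `C` to be the
measurable set `⋂ₙ {gₙ ≥ ε/2}` avoids any measurability assumption on `Z`.
-/

theorem MeasureTheory.tendstoInMeasure_const_s13 {α ι E : Type*} [MeasurableSpace α]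
    [PseudoEMetricSpace E] (μ : Measure α) (l : Filter ι) (g : α → E) :
    TendstoInMeasure μ (fun _ => g) l g := by
  intro ε hε
  simpa [hε.not_ge] using tendsto_const_nhds

theorem exists_pos_measure_setOf_le_pos {α : Type*} [MeasurableSpace α] {μ : Measure α}
    {Z : α → ℝ} (h : 0 < μ {x | 0 < Z x}) : ∃ ε > 0, 0 < μ {x | ε ≤ Z x} := by
  by_contra! h'
  have hcover : {x | 0 < Z x} ⊆ ⋃ n : ℕ, {x | 1 / (n + 1 : ℝ) ≤ Z x} := fun x hx =>
    Set.mem_iUnion.2 ((exists_nat_one_div_lt (show 0 < Z x from hx)).imp fun _ h => h.le)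
  exact h.ne' (measure_mono_null hcover
    (measure_iUnion_null fun n => nonpos_iff_eq_zero.1 (h' _ Nat.one_div_pos_of_nat)))

theorem exists_index_measure_inter_forall_dist_lt_pos {α E : Type*} [MeasurableSpace α]
    [PseudoMetricSpace E] {μ : Measure α} {f : ℕ → ℕ → α → E} {g : α → E}
    (hf : ∀ n, TendstoInMeasure μ (f n) atTop g) {A : Set α} (hA : 0 < μ A) {ε : ℝ}
    (hε : 0 < ε) : ∃ k : ℕ → ℕ, 0 < μ (A ∩ {x | ∀ n, dist (f n (k n) x) (g x) < ε}) := by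
  obtain ⟨δ, hδpos, hδsum⟩ := ENNReal.exists_pos_sum_of_countable' hA.ne' ℕ
  have hsmall : ∀ n, ∃ k, μ {x | ε ≤ dist (f n k x) (g x)} < δ n := fun n =>
    ((tendstoInMeasure_iff_dist.1 (hf n) ε hε).eventually_lt_const (hδpos n)).exists
  choose k hk using hsmall
  refine ⟨k, ?_⟩
  set U := ⋃ n, {x | ε ≤ dist (f n (k n) x) (g x)}
  have hU : μ U < μ A := (measure_iUnion_le _).trans_lt
    ((ENNReal.tsum_le_tsum fun n => (hk n).le).trans_lt hδsum)
  have hAU : A ∩ {x | ∀ n, dist (f n (k n) x) (g x) < ε} = A \ U := by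
    ext x
    simp [U, not_le]
  rw [hAU]
  exact (tsub_pos_of_lt hU).trans_le le_measure_sdiff

theorem Solid.indicator_const_mem {Ω : Type*} [MeasurableSpace Ω] {P : Measure Ω}
    {S : Set (Ω → ℝ)} (hS : Solid P S) (hsub : S ⊆ L0pos P) {X : Ω → ℝ} (hX : X ∈ S)
    {C : Set Ω} (hC : MeasurableSet C) {c : ℝ} (hc : 0 ≤ c) (hcX : ∀ ω ∈ C, c ≤ X ω) :
    C.indicator (fun _ => c) ∈ S := by
  refine hS X hX _ ⟨measurable_const.indicator hC,
    Eventually.of_forall (Set.indicator_nonneg fun _ _ => hc)⟩ ?_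
  filter_upwards [(hsub hX).2] with ω hω
  by_cases hωC : ω ∈ C
  · simpa [hωC] using hcX ω hωC
  · simpa [hωC] using hω

theorem stmt_13_general {Ω : Type*} [MeasurableSpace Ω] (P : Measure Ω)
    (S : ℕ → Set (Ω → ℝ)) (hsub : ∀ n, S n ⊆ L0pos P) (hsolid : ∀ n, Solid P (S n)) :
    (∃ Y : Ω → ℝ, (∀ n, Y ∈ S n) ∧ 0 < P {ω | 0 < Y ω}) ↔
    (∃ Z : Ω → ℝ,
      (∀ n, ∃ f : ℕ → Ω → ℝ, (∀ k, f k ∈ S n) ∧ TendstoInMeasure P f atTop Z) ∧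
      0 < P {ω | 0 < Z ω}) := by
  constructor
  · rintro ⟨Y, hY, hYpos⟩
    exact ⟨Y, fun n => ⟨fun _ => Y, fun _ => hY n, tendstoInMeasure_const_s13 P atTop Y⟩, hYpos⟩
  · rintro ⟨Z, hZ, hZpos⟩
    choose F hFS hFZ using hZ
    obtain ⟨ε, hε, hA⟩ := exists_pos_measure_setOf_le_pos hZpos
    obtain ⟨k, hk⟩ := exists_index_measure_inter_forall_dist_lt_pos hFZ hA (half_pos hε)
    set C := ⋂ n, {ω | ε / 2 ≤ F n (k n) ω}
    have hC : MeasurableSet C := MeasurableSet.iInter fun n =>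
      measurableSet_le measurable_const (hsub n (hFS n (k n))).1
    refine ⟨C.indicator fun _ => ε / 2, fun n => (hsolid n).indicator_const_mem (hsub n)
      (hFS n (k n)) hC (half_pos hε).le fun ω hω => Set.mem_iInter.1 hω n,
      hk.trans_le (measure_mono ?_)⟩
    rintro ω ⟨hZω, hdist⟩
    have hωC : ω ∈ C := Set.mem_iInter.2 fun n => by
      have hZε : ε ≤ Z ω := hZω
      have hclose := (abs_sub_lt_iff.1 (Real.dist_eq _ _ ▸ hdist n)).2
      show ε / 2 ≤ F n (k n) ω
      linarith
    simp [hωC, hε]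

/-- For a sequence of solid subsets of `L⁰₊`, the intersection of the sets contains a
nontrivial nonnegative element iff the intersection of their closures in measure does. -/
theorem stmt_13 {Ω : Type*} [MeasurableSpace Ω] (P : Measure Ω) [IsProbabilityMeasure P]
    (S : ℕ → Set (Ω → ℝ)) (hsub : ∀ n, S n ⊆ L0pos P) (hsolid : ∀ n, Solid P (S n)) :
    (∃ Y : Ω → ℝ, (∀ n, Y ∈ S n) ∧ 0 < P {ω | 0 < Y ω}) ↔
    (∃ Z : Ω → ℝ,
      (∀ n, ∃ f : ℕ → Ω → ℝ, (∀ k, f k ∈ S n) ∧ TendstoInMeasure P f atTop Z) ∧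
      0 < P {ω | 0 < Z ω}) :=
  stmt_13_general P S hsub hsolid
end

section
/- Suppose the probability measure P is atomless. Then the closure under convergence in measure of the set {X ∈ L⁰₊ : E_P[X] = 1} equals {X ∈ L⁰₊ : E_P[X] ≤ 1}; that is, X ∈ L⁰₊ is the limit in measure of a sequence of nonnegative functions each with E_P-expectation exactly 1 if and only if E_P[X] ≤ 1. -/
open MeasureTheory Filter Topology
open scoped ENNReal

/-!
If `fₙ → X` in measure, some subsequence converges a.e., and Fatou's lemma along it gives
`E[X] ≤ liminf E[fₙ] = 1`. Conversely, if `E[X] ≤ 1`, repeated halving of sets of positive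
measure (possible since `P` is atomless) yields sets `Aₙ` with `0 < P(Aₙ) → 0`. Spreading the
missing mass `δ = 1 - E[X]` uniformly over `Aₙ`, i.e. `fₙ = X + (δ / P(Aₙ)) 𝟙_{Aₙ}`, gives
`E[fₙ] = 1`, and `fₙ = X` off `Aₙ`, so `fₙ → X` in measure.
-/

section

variable {Ω : Type*} [MeasurableSpace Ω] {μ : Measure Ω}

theorem lintegral_le_of_ae_tendsto {f : ℕ → Ω → ℝ≥0∞} {g : Ω → ℝ≥0∞}
    (hf : ∀ n, AEMeasurable (f n) μ)
    (hlim : ∀ᵐ ω ∂μ, Tendsto (fun n => f n ω) atTop (𝓝 (g ω))) {c : ℝ≥0∞}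
    (hc : ∀ n, ∫⁻ ω, f n ω ∂μ ≤ c) : ∫⁻ ω, g ω ∂μ ≤ c :=
  calc ∫⁻ ω, g ω ∂μ = ∫⁻ ω, liminf (fun n => f n ω) atTop ∂μ :=
        lintegral_congr_ae (hlim.mono fun _ hω => hω.liminf_eq.symm)
    _ ≤ liminf (fun n => ∫⁻ ω, f n ω ∂μ) atTop := lintegral_liminf_le' hf
    _ ≤ c := liminf_le_of_frequently_le' (Frequently.of_forall hc)

theorem lintegral_ofReal_le_of_tendstoInMeasure {f : ℕ → Ω → ℝ} {X : Ω → ℝ}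
    (hf : ∀ n, AEMeasurable (f n) μ) (hfX : TendstoInMeasure μ f atTop X) {c : ℝ≥0∞}
    (hc : ∀ n, ∫⁻ ω, ENNReal.ofReal (f n ω) ∂μ ≤ c) :
    ∫⁻ ω, ENNReal.ofReal (X ω) ∂μ ≤ c := by
  obtain ⟨ns, -, hns⟩ := hfX.exists_seq_tendsto_ae
  refine lintegral_le_of_ae_tendsto (fun n => (hf (ns n)).ennreal_ofReal) ?_ fun n => hc (ns n)
  exact hns.mono fun _ hω => (ENNReal.continuous_ofReal.tendsto _).comp hω

theorem tendstoInMeasure_of_eq_off {E ι : Type*} [PseudoEMetricSpace E] {l : Filter ι}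
    {f : ι → Ω → E} {g : Ω → E} {A : ι → Set Ω} (hfg : ∀ i, ∀ ω ∉ A i, f i ω = g ω)
    (hA : Tendsto (fun i => μ (A i)) l (𝓝 0)) : TendstoInMeasure μ f l g := by
  intro ε hε
  refine tendsto_of_tendsto_of_tendsto_of_le_of_le tendsto_const_nhds hA (fun _ => zero_le)
    fun i => measure_mono fun ω hω => ?_
  by_contra hωA
  simp only [Set.mem_ofPred_eq, hfg i ω hωA, edist_self] at hω
  exact hε.not_ge hω

theorem lintegral_ofReal_add_indicator_const {X : Ω → ℝ} (hX : AEMeasurable X μ)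
    (hX0 : ∀ᵐ ω ∂μ, 0 ≤ X ω) {A : Set Ω} (hA : MeasurableSet A) {c : ℝ} (hc : 0 ≤ c) :
    ∫⁻ ω, ENNReal.ofReal (X ω + A.indicator (fun _ => c) ω) ∂μ
      = ∫⁻ ω, ENNReal.ofReal (X ω) ∂μ + ENNReal.ofReal c * μ A := by
  have hsplit : ∀ᵐ ω ∂μ, ENNReal.ofReal (X ω + A.indicator (fun _ => c) ω)
      = ENNReal.ofReal (X ω) + A.indicator (fun _ => ENNReal.ofReal c) ω := by
    filter_upwards [hX0] with ω hω
    rw [ENNReal.ofReal_add hω (Set.indicator_nonneg (fun _ _ => hc) ω)]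
    by_cases hωA : ω ∈ A <;> simp [hωA]
  rw [lintegral_congr_ae hsplit, lintegral_add_left' hX.ennreal_ofReal,
    lintegral_indicator_const hA]

/-- Stronger than `NoAtoms`, which only asks singletons to be null. -/
def Atomless (μ : Measure Ω) : Prop :=
  ∀ B : Set Ω, MeasurableSet B → 0 < μ B →
    ∃ C : Set Ω, MeasurableSet C ∧ C ⊆ B ∧ 0 < μ C ∧ μ C < μ B

theorem exists_subset_measure_pos_le_half (hμ : Atomless μ)
    {B : Set Ω} (hB : MeasurableSet B) (hB0 : 0 < μ B) (hBtop : μ B ≠ ∞) :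
    ∃ C ⊆ B, MeasurableSet C ∧ 0 < μ C ∧ μ C ≤ μ B / 2 := by
  obtain ⟨C, hC, hCB, hC0, hClt⟩ := hμ B hB hB0
  by_cases hC2 : μ C ≤ μ B / 2
  · exact ⟨C, hCB, hC, hC0, hC2⟩
  have hdiff : μ (B \ C) = μ B - μ C := measure_sdiff hCB hC.nullMeasurableSet (ne_top_of_lt hClt)
  refine ⟨B \ C, Set.sdiff_subset, hB.diff hC, ?_, ?_⟩
  · rw [hdiff]
    exact tsub_pos_of_lt hClt
  · rw [hdiff, ← ENNReal.sub_half hBtop]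
    exact tsub_le_tsub_left (not_le.1 hC2).le _

theorem exists_subset_measure_pos_le_half_pow (hμ : Atomless μ)
    {B : Set Ω} (hB : MeasurableSet B) (hB0 : 0 < μ B) (hBtop : μ B ≠ ∞) (n : ℕ) :
    ∃ C ⊆ B, MeasurableSet C ∧ 0 < μ C ∧ μ C ≤ μ B * 2⁻¹ ^ n := by
  induction n with
  | zero => exact ⟨B, subset_rfl, hB, hB0, by simp⟩
  | succ n ih =>
    obtain ⟨C, hCB, hC, hC0, hCle⟩ := ih
    obtain ⟨D, hDC, hD, hD0, hDle⟩ :=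
      exists_subset_measure_pos_le_half hμ hC hC0 (ne_top_of_le_ne_top hBtop (measure_mono hCB))
    refine ⟨D, hDC.trans hCB, hD, hD0, ?_⟩
    calc μ D ≤ μ C / 2 := hDle
      _ ≤ μ B * 2⁻¹ ^ n / 2 := by gcongr
      _ = μ B * 2⁻¹ ^ (n + 1) := by rw [pow_succ, ← mul_assoc, div_eq_mul_inv]

theorem exists_seq_measure_pos_tendsto_zero [IsFiniteMeasure μ] [NeZero μ] (hμ : Atomless μ) :
    ∃ A : ℕ → Set Ω, (∀ n, MeasurableSet (A n) ∧ 0 < μ (A n)) ∧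
      Tendsto (fun n => μ (A n)) atTop (𝓝 0) := by
  choose A _ hA hA0 hAle using exists_subset_measure_pos_le_half_pow hμ MeasurableSet.univ
    (NeZero.pos (μ Set.univ)) (measure_ne_top μ _)
  refine ⟨A, fun n => ⟨hA n, hA0 n⟩, ?_⟩
  have hgeom : Tendsto (fun n : ℕ => μ Set.univ * 2⁻¹ ^ n) atTop (𝓝 0) := by
    simpa using ENNReal.Tendsto.const_mul
      (ENNReal.tendsto_pow_atTop_nhds_zero_of_lt_one (r := 2⁻¹) (by norm_num))
      (Or.inr (measure_ne_top μ _))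
  exact tendsto_of_tendsto_of_tendsto_of_le_of_le tendsto_const_nhds hgeom (fun _ => zero_le) hAle

end

/-- If `P` is atomless, the closure in measure of `{X ∈ L⁰₊ : E_P[X] = 1}` is
`{X ∈ L⁰₊ : E_P[X] ≤ 1}`. -/
theorem stmt_18 {Ω : Type*} [MeasurableSpace Ω] (P : Measure Ω) [IsProbabilityMeasure P]
    (hatomless : ∀ B : Set Ω, MeasurableSet B → 0 < P B →
      ∃ C : Set Ω, MeasurableSet C ∧ C ⊆ B ∧ 0 < P C ∧ P C < P B)
    (X : Ω → ℝ) (hX : X ∈ L0pos P) :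
    (∃ f : ℕ → Ω → ℝ,
        (∀ n, f n ∈ L0pos P ∧ ∫⁻ ω, ENNReal.ofReal (f n ω) ∂P = 1) ∧
        TendstoInMeasure P f atTop X) ↔
    ∫⁻ ω, ENNReal.ofReal (X ω) ∂P ≤ 1 := by
  obtain ⟨hXm, hX0⟩ := hX
  refine ⟨fun ⟨f, hf, hfX⟩ => lintegral_ofReal_le_of_tendstoInMeasure
    (fun n => (hf n).1.1.aemeasurable) hfX fun n => (hf n).2.le, fun hX1 => ?_⟩
  set δ := 1 - ∫⁻ ω, ENNReal.ofReal (X ω) ∂P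
  obtain ⟨A, hA, hAlim⟩ := exists_seq_measure_pos_tendsto_zero hatomless
  set c : ℕ → ℝ := fun n => (δ / P (A n)).toReal
  have hmass (n : ℕ) : ENNReal.ofReal (c n) * P (A n) = δ := by
    rw [ENNReal.ofReal_toReal (ENNReal.div_ne_top (by finiteness) (hA n).2.ne'),
      ENNReal.div_mul_cancel (hA n).2.ne' (measure_ne_top P _)]
  refine ⟨fun n => X + (A n).indicator (fun _ => c n), fun n => ⟨⟨?_, ?_⟩, ?_⟩, ?_⟩
  · exact hXm.add (measurable_const.indicator (hA n).1)
  · filter_upwards [hX0] with ω hω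
    exact add_nonneg hω (Set.indicator_nonneg (fun _ _ => ENNReal.toReal_nonneg) ω)
  · exact (lintegral_ofReal_add_indicator_const hXm.aemeasurable hX0 (hA n).1
      ENNReal.toReal_nonneg).trans (by rw [hmass, add_tsub_cancel_of_le hX1])
  · exact tendstoInMeasure_of_eq_off (fun n ω hω => by simp [hω]) hAlim
end
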